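/- For δ > 0, the function t ↦ Re f(√δ + t ± it) = δ + 2√δ·t + (1/2)·log(1 − 4√δ·t + 8t²δ + 4t⁴ + 8√δ·t³) is nondecreasing on [0, ∞), with strict increase for t > 0. -/

import Mathlib

/-!
Write `s = √δ` and `w = s + t + i t`. Then `1 + δ - w² = (1 - 2st) - 2it(s + t)`, so the
argument of the logarithm is the squared modulus `(1 - 2st)² + (2t(s + t))²`, which never
vanishes. Differentiating, the derivative of the phase is
`4t² (4s³ + 4s²t + 2st² + 3s + 2t)` divided by that modulus, which is positive for `t > 0`
(and `s ≥ 0`).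
-/

namespace DiagonalContour

def quartic (s t : ℝ) : ℝ :=
  1 - 4 * s * t + 8 * t ^ 2 * s ^ 2 + 4 * t ^ 4 + 8 * s * t ^ 3

noncomputable def phase (s t : ℝ) : ℝ :=
  s ^ 2 + 2 * s * t + (1 / 2) * Real.log (quartic s t)

variable (s : ℝ)

theorem quartic_eq_sq_add_sq (t : ℝ) :
    quartic s t = (1 - 2 * s * t) ^ 2 + (2 * t * (s + t)) ^ 2 := by
  unfold quartic; ring

theorem quartic_pos (t : ℝ) : 0 < quartic s t := by
  rw [quartic_eq_sq_add_sq]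
  rcases eq_or_ne t 0 with rfl | ht
  · norm_num
  rcases eq_or_ne (s + t) 0 with hst | hst
  · have h : 1 - 2 * s * t = 1 + 2 * s ^ 2 := by
      rw [eq_neg_of_add_eq_zero_right hst]; ring
    rw [h]; positivity
  · positivity

theorem hasDerivAt_quartic (t : ℝ) :
    HasDerivAt (quartic s) (-4 * s + 16 * t * s ^ 2 + 16 * t ^ 3 + 24 * s * t ^ 2) t := by
  have h := (((((hasDerivAt_id t).const_mul (4 * s)).const_sub 1).add
    (((hasDerivAt_pow 2 t).const_mul 8).mul_const (s ^ 2))).add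
    ((hasDerivAt_pow 4 t).const_mul 4)).add ((hasDerivAt_pow 3 t).const_mul (8 * s))
  refine h.congr_deriv ?_
  norm_num
  ring

theorem hasDerivAt_phase (t : ℝ) :
    HasDerivAt (phase s)
      (4 * t ^ 2 * (4 * s ^ 3 + 4 * s ^ 2 * t + 2 * s * t ^ 2 + 3 * s + 2 * t) / quartic s t) t := by
  have hQ := quartic_pos s t
  have h := (((hasDerivAt_id t).const_mul (2 * s)).const_add (s ^ 2)).add
    (((hasDerivAt_quartic s t).log hQ.ne').const_mul (1 / 2))
  refine h.congr_deriv ?_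
  field_simp
  unfold quartic
  ring

theorem strictMonoOn_phase {s : ℝ} (hs : 0 ≤ s) : StrictMonoOn (phase s) (Set.Ici 0) := by
  refine strictMonoOn_of_deriv_pos (convex_Ici 0)
    (fun t _ => (hasDerivAt_phase s t).continuousAt.continuousWithinAt) fun t ht => ?_
  rw [interior_Ici, Set.mem_Ioi] at ht
  rw [(hasDerivAt_phase s t).deriv]
  have := quartic_pos s t
  positivity

end DiagonalContour

open DiagonalContour in
/-- For `δ > 0`, the map
`t ↦ Re f(√δ + t ± it) = δ + 2√δ t + (1/2) log(1 − 4√δ t + 8t²δ + 4t⁴ + 8√δ t³)`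
is nondecreasing on `[0, ∞)`, with strict increase for `t > 0`. -/
theorem phase_along_diagonal_contour_increasing (δ : ℝ) (hδ : 0 < δ) :
    MonotoneOn
      (fun t : ℝ => δ + 2 * Real.sqrt δ * t
        + (1 / 2) * Real.log (1 - 4 * Real.sqrt δ * t + 8 * t ^ 2 * δ
            + 4 * t ^ 4 + 8 * Real.sqrt δ * t ^ 3))
      (Set.Ici (0 : ℝ)) ∧
    StrictMonoOn
      (fun t : ℝ => δ + 2 * Real.sqrt δ * t
        + (1 / 2) * Real.log (1 - 4 * Real.sqrt δ * t + 8 * t ^ 2 * δ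
            + 4 * t ^ 4 + 8 * Real.sqrt δ * t ^ 3))
      (Set.Ioi (0 : ℝ)) := by
  have h_eq : (fun t : ℝ => δ + 2 * Real.sqrt δ * t
      + (1 / 2) * Real.log (1 - 4 * Real.sqrt δ * t + 8 * t ^ 2 * δ
          + 4 * t ^ 4 + 8 * Real.sqrt δ * t ^ 3)) = phase (Real.sqrt δ) := by
    funext t
    simp only [phase, quartic, Real.sq_sqrt hδ.le]
  rw [h_eq]
  have h_strict := strictMonoOn_phase (Real.sqrt_nonneg δ)
  exact ⟨h_strict.monotoneOn, h_strict.mono Set.Ioi_subset_Ici_self⟩
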